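/- Let k ≥ 1, φ ∈ ℝ, and let P = P₁ ⊗ ⋯ ⊗ P_k be a Pauli string. There exists λ ∈ ℂ with λ ≠ 0 and P|φ, k⟩ = λ • |φ, k⟩ if and only if either (a) every P_j ∈ {I₂, Z} and the number of indices j with P_j = Z is even, or (b) every P_j ∈ {X, Y}, φ is an integer multiple of π/2, and the number of indices j with P_j = Y is even if φ is an integer multiple of π and odd if φ is an odd integer multiple of π/2. -/

import Mathlib

/-- The four Pauli labels. -/
inductive Pauli | I | X | Y | Z
  deriving DecidableEq

instance : Fintype Pauli :=
  ⟨{Pauli.I, Pauli.X, Pauli.Y, Pauli.Z}, fun x => by cases x <;> simp⟩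

/-- The Pauli matrices as 2×2 complex matrices. -/
def Pauli.mat : Pauli → Matrix (Fin 2) (Fin 2) ℂ
  | Pauli.I => 1
  | Pauli.X => !![0, 1; 1, 0]
  | Pauli.Y => !![0, -Complex.I; Complex.I, 0]
  | Pauli.Z => !![1, 0; 0, -1]

/-- The `n`-qubit Pauli operator `P₁ ⊗ ⋯ ⊗ Pₙ`, the Kronecker product realized as a
matrix indexed by bit strings `Fin n → Fin 2` (a `2ⁿ × 2ⁿ` complex matrix). -/
def pauliOp {n : ℕ} (p : Fin n → Pauli) :
    Matrix (Fin n → Fin 2) (Fin n → Fin 2) ℂ :=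
  Matrix.of fun f g => ∏ j, (p j).mat (f j) (g j)

/-- The Z-spider state `|φ, k⟩ = |0⟩^{⊗k} + e^{iφ}|1⟩^{⊗k}`, realized in the function space
`(Fin k → Fin 2) → ℂ`: it takes value `1` on the all-zeros string, `e^{iφ}` on the all-ones
string and `0` elsewhere. -/
noncomputable def zspiderState (k : ℕ) (φ : ℝ) : (Fin k → Fin 2) → ℂ :=
  fun f => (if ∀ j, f j = 0 then (1 : ℂ) else 0) +
    Complex.exp ((φ : ℂ) * Complex.I) * (if ∀ j, f j = 1 then 1 else 0)

/-- The "bit" of a Pauli label: on which basis vector column 0 of the matrix is supported. -/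
def Pauli.bit : Pauli → Fin 2
  | Pauli.I => 0 | Pauli.Z => 0 | Pauli.X => 1 | Pauli.Y => 1

lemma mat_col0 (p : Pauli) (a : Fin 2) :
    p.mat a 0 = if a = p.bit then (if p = Pauli.Y then Complex.I else 1) else 0 := by
  rcases p <;> fin_cases a <;> simp [Pauli.mat, Pauli.bit, Matrix.one_apply]

lemma mat_col1 (p : Pauli) (a : Fin 2) :
    p.mat a 1 = if a = p.bit then 0 else
      (if p = Pauli.Z then -1 else 1) * (if p = Pauli.Y then -Complex.I else 1) := by
  rcases p <;> fin_cases a <;> simp [Pauli.mat, Pauli.bit, Matrix.one_apply]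

lemma prod_ite_pow {k : ℕ} (Q : Fin k → Prop) [DecidablePred Q] (c : ℂ) :
    (∏ j, if Q j then c else 1) = c ^ (Finset.univ.filter Q).card := by
  rw [Finset.prod_ite, Finset.prod_const, Finset.prod_const_one, mul_one]

lemma zspider_eq (k : ℕ) (φ : ℝ) :
    zspiderState k φ = (Pi.single (fun _ => (0:Fin 2)) (1:ℂ) : (Fin k → Fin 2) → ℂ) +
      Complex.exp ((φ:ℂ) * Complex.I) •
        (Pi.single (fun _ => (1:Fin 2)) (1:ℂ) : (Fin k → Fin 2) → ℂ) := by
  funext f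
  by_cases h0 : ∀ j, f j = 0 <;> by_cases h1 : ∀ j, f j = 1 <;>
    simp [zspiderState, Pi.single_apply, funext_iff, h0, h1]

lemma mulVec_zspider {k : ℕ} (φ : ℝ) (P : Fin k → Pauli) :
    (pauliOp P).mulVec (zspiderState k φ) = fun f =>
      (∏ j, (P j).mat (f j) 0) +
        Complex.exp ((φ:ℂ) * Complex.I) * ∏ j, (P j).mat (f j) 1 := by
  funext f
  rw [zspider_eq, Matrix.mulVec_add, Matrix.mulVec_smul]
  simp [Matrix.mulVec_single, pauliOp]

lemma phase_iff (φ : ℝ) (y : ℕ) :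
    Complex.exp ((φ:ℂ) * Complex.I) * Complex.exp ((φ:ℂ) * Complex.I) = (-1)^y ↔
      ((∃ m : ℤ, φ = m * (Real.pi / 2)) ∧
       ((∃ m : ℤ, φ = m * Real.pi) → Even y) ∧
       ((∃ m : ℤ, φ = (2 * m + 1) * (Real.pi / 2)) → Odd y)) := by
  have hπ : (Real.pi / 2) ≠ 0 := by positivity
  have cancel : ∀ a b : ℤ, (a:ℝ) * (Real.pi/2) = b * (Real.pi/2) → a = b := by
    intro a b h
    have : (a:ℝ) = b := mul_right_cancel₀ hπ h
    exact_mod_cast this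
  rw [← Complex.exp_add]
  constructor
  · intro h
    rcases Nat.even_or_odd y with hy | hy
    · rw [hy.neg_one_pow, Complex.exp_eq_one_iff] at h
      obtain ⟨n, hn⟩ := h
      have hn' : ((2*φ : ℝ) : ℂ) * Complex.I = ((n * (2*Real.pi) : ℝ) : ℂ) * Complex.I := by
        push_cast
        linear_combination hn
      have hr : (2*φ : ℝ) = n * (2*Real.pi) := by
        exact_mod_cast mul_right_cancel₀ Complex.I_ne_zero hn'
      have hφ : φ = ((2*n : ℤ) : ℝ) * (Real.pi/2) := by push_cast; linarith
      refine ⟨⟨2*n, hφ⟩, fun _ => hy, fun ⟨m, hm⟩ => ?_⟩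
      exfalso
      have heq : ((2*m+1:ℤ):ℝ) * (Real.pi/2) = ((2*n:ℤ):ℝ) * (Real.pi/2) := by
        push_cast; push_cast at hφ hm; linarith
      have := cancel _ _ heq
      omega
    · rw [hy.neg_one_pow] at h
      have h1 : Complex.exp (((φ:ℂ) * Complex.I + (φ:ℂ) * Complex.I) + Real.pi * Complex.I) = 1 := by
        rw [Complex.exp_add, h, Complex.exp_pi_mul_I]; ring
      rw [Complex.exp_eq_one_iff] at h1
      obtain ⟨n, hn⟩ := h1
      have hn' : ((2*φ + Real.pi : ℝ) : ℂ) * Complex.I = ((n * (2*Real.pi) : ℝ) : ℂ) * Complex.I := by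
        push_cast
        linear_combination hn
      have hr : (2*φ + Real.pi : ℝ) = n * (2*Real.pi) := by
        exact_mod_cast mul_right_cancel₀ Complex.I_ne_zero hn'
      have hφ : φ = ((2*(n-1)+1 : ℤ) : ℝ) * (Real.pi/2) := by push_cast; linarith
      refine ⟨⟨2*(n-1)+1, hφ⟩, fun ⟨m, hm⟩ => ?_, fun _ => hy⟩
      exfalso
      have heq : ((2*(n-1)+1:ℤ):ℝ) * (Real.pi/2) = ((2*m:ℤ):ℝ) * (Real.pi/2) := by
        push_cast; push_cast at hφ hm; linarith
      have := cancel _ _ heq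
      omega
  · rintro ⟨⟨n, hn⟩, hev, hodd⟩
    rcases Int.even_or_odd n with ⟨m, hm⟩ | ⟨m, hm⟩
    · have hφ : φ = m * Real.pi := by rw [hn, hm]; push_cast; ring
      have hy : Even y := hev ⟨m, hφ⟩
      rw [hy.neg_one_pow]
      have h2 : (φ:ℂ) * Complex.I + (φ:ℂ) * Complex.I = (m:ℤ) * (2 * Real.pi * Complex.I) := by
        rw [hφ]; push_cast; ring
      rw [h2]; exact Complex.exp_int_mul_two_pi_mul_I m
    · have hφ : φ = (2*m+1 : ℤ) * (Real.pi/2) := by rw [hn, hm]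
      have hy : Odd y := hodd ⟨m, by push_cast at hφ ⊢; linarith⟩
      rw [hy.neg_one_pow]
      have h2 : (φ:ℂ) * Complex.I + (φ:ℂ) * Complex.I = (m:ℤ) * (2 * Real.pi * Complex.I) + Real.pi * Complex.I := by
        rw [hφ]; push_cast; ring
      rw [h2, Complex.exp_add, Complex.exp_int_mul_two_pi_mul_I, Complex.exp_pi_mul_I, one_mul]

/-- A Pauli string sends the Z-spider state `|φ, k⟩` to a nonzero multiple
of itself iff either (a) all labels are in `{I, Z}` and the number of `Z`s is even, or
(b) all labels are in `{X, Y}`, `φ` is an integer multiple of `π/2`, and the number of `Y`s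
is even if `φ` is an integer multiple of `π` and odd if `φ` is an odd integer multiple
of `π/2`. -/
theorem zspider_eigenstate_iff (k : ℕ) (hk : 1 ≤ k) (φ : ℝ) (P : Fin k → Pauli) :
    (∃ lam : ℂ, lam ≠ 0 ∧
        (pauliOp P).mulVec (zspiderState k φ) = lam • zspiderState k φ) ↔
      ((∀ j, P j = Pauli.I ∨ P j = Pauli.Z) ∧
          Even (Finset.univ.filter fun j => P j = Pauli.Z).card) ∨
      ((∀ j, P j = Pauli.X ∨ P j = Pauli.Y) ∧
          (∃ m : ℤ, φ = m * (Real.pi / 2)) ∧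
          ((∃ m : ℤ, φ = m * Real.pi) →
            Even (Finset.univ.filter fun j => P j = Pauli.Y).card) ∧
          ((∃ m : ℤ, φ = (2 * m + 1) * (Real.pi / 2)) →
            Odd (Finset.univ.filter fun j => P j = Pauli.Y).card)) := by
  set y := (Finset.univ.filter fun j => P j = Pauli.Y).card with hy
  set z := (Finset.univ.filter fun j => P j = Pauli.Z).card with hz
  set e := Complex.exp ((φ:ℂ) * Complex.I) with he
  have he0 : e ≠ 0 := Complex.exp_ne_zero _
  set j0 : Fin k := ⟨0, hk⟩ with hj0
  haveI : Nonempty (Fin k) := ⟨j0⟩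
  have fin2 : ∀ a : Fin 2, (a ≠ 0 ↔ a = 1) := by decide
  have fin2' : ∀ a : Fin 2, (a ≠ 1 ↔ a = 0) := by decide
  have hIne : (-Complex.I) ^ y ≠ 0 :=
    pow_ne_zero _ (neg_ne_zero.mpr Complex.I_ne_zero)
  have hpowI : (Complex.I : ℂ) ^ y = (-1:ℂ)^y * (-Complex.I)^y := by
    rw [← mul_pow]; norm_num
  have hA : ∀ f : Fin k → Fin 2, (∏ j, (P j).mat (f j) 0) =
      if (∀ j, f j = (P j).bit) then Complex.I ^ y else 0 := by
    intro f
    by_cases h : ∀ j, f j = (P j).bit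
    · rw [if_pos h, ← prod_ite_pow (fun j => P j = Pauli.Y) Complex.I]
      exact Finset.prod_congr rfl fun j _ => by rw [mat_col0, if_pos (h j)]
    · rw [if_neg h]
      push_neg at h; obtain ⟨j, hj⟩ := h
      exact Finset.prod_eq_zero (Finset.mem_univ j) (by rw [mat_col0, if_neg hj])
  have hB : ∀ f : Fin k → Fin 2, (∏ j, (P j).mat (f j) 1) =
      if (∀ j, f j ≠ (P j).bit) then (-1:ℂ) ^ z * (-Complex.I) ^ y else 0 := by
    intro f
    by_cases h : ∀ j, f j ≠ (P j).bit
    · rw [if_pos h,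
        show (∏ j, (P j).mat (f j) 1) = ∏ j, ((if P j = Pauli.Z then (-1:ℂ) else 1) *
            (if P j = Pauli.Y then -Complex.I else 1)) from
          Finset.prod_congr rfl fun j _ => by rw [mat_col1, if_neg (h j)],
        Finset.prod_mul_distrib, prod_ite_pow, prod_ite_pow]
    · rw [if_neg h]
      push_neg at h; obtain ⟨j, hj⟩ := h
      exact Finset.prod_eq_zero (Finset.mem_univ j) (by rw [mat_col1, if_pos hj])
  have key : ∀ lam : ℂ, ((pauliOp P).mulVec (zspiderState k φ) = lam • zspiderState k φ) ↔
      ∀ f : Fin k → Fin 2,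
        (if (∀ j, f j = (P j).bit) then Complex.I ^ y else 0) +
          e * (if (∀ j, f j ≠ (P j).bit) then (-1:ℂ) ^ z * (-Complex.I) ^ y else 0) =
        lam * ((if ∀ j, f j = 0 then (1:ℂ) else 0) + e * (if ∀ j, f j = 1 then 1 else 0)) := by
    intro lam
    rw [mulVec_zspider, funext_iff]
    refine forall_congr' fun f => ?_
    rw [hA f, hB f]
    exact Iff.rfl
  constructor
  · rintro ⟨lam, hl0, heq⟩
    rw [key lam] at heq
    by_cases h1 : ∀ j, P j = Pauli.I ∨ P j = Pauli.Z
    · left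
      refine ⟨h1, ?_⟩
      have hbit : ∀ j, (P j).bit = 0 := fun j => by
        rcases h1 j with h | h <;> rw [h] <;> rfl
      have hy0 : y = 0 := by
        rw [hy, Finset.card_eq_zero, Finset.filter_eq_empty_iff]
        intro j _
        rcases h1 j with h | h <;> simp [h]
      have h0 := heq (fun _ => 0)
      have h1' := heq (fun _ => 1)
      simp only [hbit, hy0, pow_zero] at h0 h1'
      norm_num at h0 h1'
      -- h0 : 1 = lam ; h1' : e * (-1)^z = lam * e  (modulo simp normal form)
      have hz1 : (-1:ℂ)^z = 1 := by
        have h := h1'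
        rw [← h0, one_mul] at h
        exact mul_left_cancel₀ he0 (by rw [mul_one]; exact h)
      rcases Nat.even_or_odd z with hev | hodd
      · exact hev
      · exfalso; rw [hodd.neg_one_pow] at hz1; norm_num at hz1
    · by_cases h2 : ∀ j, P j = Pauli.X ∨ P j = Pauli.Y
      · right
        refine ⟨h2, ?_⟩
        have hbit : ∀ j, (P j).bit = 1 := fun j => by
          rcases h2 j with h | h <;> rw [h] <;> rfl
        have hz0 : z = 0 := by
          rw [hz, Finset.card_eq_zero, Finset.filter_eq_empty_iff]
          intro j _
          rcases h2 j with h | h <;> simp [h]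
        have h0 := heq (fun _ => 0)
        have h1' := heq (fun _ => 1)
        simp only [hbit, hz0, pow_zero, one_mul] at h0 h1'
        norm_num at h0 h1'
        -- h0 : e * (-I)^y = lam ; h1' : I^y = lam * e
        rw [← phase_iff φ y, ← he]
        -- derive e*e = (-1)^y
        have hcomb : Complex.I ^ y = (e * e) * (-Complex.I)^y := by
          rw [h1', ← h0]; ring
        rw [hpowI] at hcomb
        have h3 : (-1:ℂ)^y = e * e := mul_right_cancel₀ hIne hcomb
        exact h3.symm
      · exfalso
        push_neg at h1 h2
        obtain ⟨ja, hja⟩ := h1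
        obtain ⟨jb, hjb⟩ := h2
        have hba : (P ja).bit = 1 := by
          rcases hPa : P ja <;> simp_all [Pauli.bit]
        have hbb : (P jb).bit = 0 := by
          rcases hPb : P jb <;> simp_all [Pauli.bit]
        have ht := heq (fun j => (P j).bit)
        have c1 : ∀ j : Fin k, (P j).bit = (P j).bit := fun _ => rfl
        have c2 : ¬ ∀ j : Fin k, (P j).bit ≠ (P j).bit := fun h => h j0 rfl
        have c3 : ¬ ∀ j : Fin k, (P j).bit = 0 := fun h => by
          rw [h ja] at hba; exact absurd hba (by decide)
        have c4 : ¬ ∀ j : Fin k, (P j).bit = 1 := fun h => by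
          rw [h jb] at hbb; exact absurd hbb (by decide)
        rw [if_pos c1, if_neg c2, if_neg c3, if_neg c4] at ht
        simp only [mul_zero, add_zero, zero_add, mul_add, zero_mul] at ht
        exact pow_ne_zero y Complex.I_ne_zero ht
  · rintro (⟨h1, hzeven⟩ | ⟨h2, hcond⟩)
    · refine ⟨1, one_ne_zero, (key 1).mpr fun f => ?_⟩
      have hbit : ∀ j, (P j).bit = 0 := fun j => by
        rcases h1 j with h | h <;> rw [h] <;> rfl
      have hy0 : y = 0 := by
        rw [hy, Finset.card_eq_zero, Finset.filter_eq_empty_iff]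
        intro j _
        rcases h1 j with h | h <;> simp [h]
      have e1 : (∀ j, f j = (P j).bit) ↔ (∀ j, f j = 0) := by simp [hbit]
      have e2 : (∀ j, f j ≠ (P j).bit) ↔ (∀ j, f j = 1) := by
        simp only [hbit]
        exact forall_congr' fun j => fin2 (f j)
      rw [hy0, pow_zero, hzeven.neg_one_pow]
      simp only [e1, e2, one_mul]
      ring_nf
    · refine ⟨e * (-Complex.I)^y, mul_ne_zero he0 hIne, (key _).mpr fun f => ?_⟩
      have he2 : e * e = (-1:ℂ)^y := by
        rw [he]; exact (phase_iff φ y).mpr hcond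
      have hbit : ∀ j, (P j).bit = 1 := fun j => by
        rcases h2 j with h | h <;> rw [h] <;> rfl
      have hz0 : z = 0 := by
        rw [hz, Finset.card_eq_zero, Finset.filter_eq_empty_iff]
        intro j _
        rcases h2 j with h | h <;> simp [h]
      have e1 : (∀ j, f j = (P j).bit) ↔ (∀ j, f j = 1) := by simp [hbit]
      have e2 : (∀ j, f j ≠ (P j).bit) ↔ (∀ j, f j = 0) := by
        simp only [hbit]
        exact forall_congr' fun j => fin2' (f j)
      rw [hz0, pow_zero, one_mul]
      simp only [e1, e2]
      by_cases hC0 : ∀ j, f j = 0 <;> by_cases hC1 : ∀ j, f j = 1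
      · exfalso
        have := (hC0 j0).symm.trans (hC1 j0)
        exact absurd this (by decide)
      · simp only [if_pos hC0, if_neg hC1]
        ring
      · simp only [if_neg hC0, if_pos hC1]
        rw [hpowI, ← he2]
        ring
      · simp only [if_neg hC0, if_neg hC1]
        ring
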